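/- Let k be a field with char(k) = 2 and let A = B = k[Z_2]. If τ: B⊗A → A⊗B is a twisting map, then τ(b⊗a) is either α(1⊗1) + (a⊗b) for some α ∈ k, or α(1⊗1) + α(1⊗b) + α(a⊗1) + (α+1)(a⊗b) for some α ∈ k. -/

import Mathlib

open TensorProduct

noncomputable section

/-- The group algebra `k[ℤ₂]`. -/
abbrev GA (k : Type*) [Field k] := AddMonoidAlgebra k (ZMod 2)

/-- The group-like generator `a` of `k[ℤ₂]`, satisfying `a² = 1`. -/
def gen (k : Type*) [Field k] : GA k := AddMonoidAlgebra.single (1 : ZMod 2) (1 : k)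

/-- `τ : B ⊗ A → A ⊗ B` is a twisting map: unitality plus compatibility with
the multiplications of `A` and `B`. -/
def IsTwistingMap (k : Type*) [Field k] (A B : Type*) [Ring A] [Ring B]
    [Algebra k A] [Algebra k B] (τ : B ⊗[k] A →ₗ[k] A ⊗[k] B) : Prop :=
  (∀ b : B, τ (b ⊗ₜ 1) = 1 ⊗ₜ b) ∧
  (∀ a : A, τ (1 ⊗ₜ a) = a ⊗ₜ 1) ∧
  (τ ∘ₗ LinearMap.lTensor B (LinearMap.mul' k A)
      ∘ₗ (TensorProduct.assoc k B A A).toLinearMap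
    = LinearMap.rTensor B (LinearMap.mul' k A)
        ∘ₗ (TensorProduct.assoc k A A B).symm.toLinearMap
        ∘ₗ LinearMap.lTensor A τ
        ∘ₗ (TensorProduct.assoc k A B A).toLinearMap
        ∘ₗ LinearMap.rTensor A τ) ∧
  (τ ∘ₗ LinearMap.rTensor A (LinearMap.mul' k B)
      ∘ₗ (TensorProduct.assoc k B B A).symm.toLinearMap
    = LinearMap.lTensor A (LinearMap.mul' k B)
        ∘ₗ (TensorProduct.assoc k A B B).toLinearMap
        ∘ₗ LinearMap.rTensor B τ
        ∘ₗ (TensorProduct.assoc k B A B).symm.toLinearMap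
        ∘ₗ LinearMap.lTensor B τ)

/-! Write `τ(b ⊗ a) = α + β y + γ x + δ xy` in the basis `1, y = 1 ⊗ b, x = a ⊗ 1, xy = a ⊗ b` of
`A ⊗ B`, a commutative algebra with `x² = y² = 1`. Compatibility with the multiplication of `A`,
evaluated on `b ⊗ a ⊗ a`, reads `y = γ + αx + (β + δx) τ(b ⊗ a)`; compatibility with that of `B`,
evaluated on `b ⊗ b ⊗ a`, reads `x = β + αy + τ(b ⊗ a) (γ + δy)`. Comparing coefficients gives
`β² + δ² = γ² + δ² = 1` and `γ + βα + δγ = 0`. In characteristic `2` squaring is injective, so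
`β + δ = γ + δ = 1`, and the last relation becomes `β (α + β) = 0`. -/

namespace TensorProduct

variable {R A B : Type*} [CommSemiring R] [Semiring A] [Semiring B] [Algebra R A] [Algebra R B]

theorem rTensor_mul'_assoc_symm_tmul (x : A) (t : A ⊗[R] B) :
    LinearMap.rTensor B (LinearMap.mul' R A) ((TensorProduct.assoc R A A B).symm (x ⊗ₜ t))
      = (x ⊗ₜ 1) * t := by
  induction t with
  | zero => simp
  | tmul y z => simp [Algebra.TensorProduct.tmul_mul_tmul]
  | add s t hs ht => simp [tmul_add, mul_add, hs, ht]

theorem lTensor_mul'_assoc_tmul (t : A ⊗[R] B) (y : B) :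
    LinearMap.lTensor A (LinearMap.mul' R B) (TensorProduct.assoc R A B B (t ⊗ₜ y))
      = t * (1 ⊗ₜ y) := by
  induction t with
  | zero => simp
  | tmul x z => simp [Algebra.TensorProduct.tmul_mul_tmul]
  | add s t hs ht => simp [add_tmul, add_mul, hs, ht]

end TensorProduct

section TwistMul

variable {R A B : Type*} [CommSemiring R] [Semiring A] [Semiring B] [Algebra R A] [Algebra R B]
  (τ : B ⊗[R] A →ₗ[R] A ⊗[R] B)

/- As functions of `τ (b ⊗ a)`, the right-hand sides of the compatibility of `τ` with the
multiplications of `A` (at `b ⊗ a ⊗ a'`) and of `B` (at `b ⊗ b' ⊗ a`). -/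
def twistRightMul (a : A) : A ⊗[R] B →ₗ[R] A ⊗[R] B :=
  lift ((LinearMap.mul R (A ⊗[R] B)).compl₁₂ Algebra.TensorProduct.includeLeft.toLinearMap
    (τ ∘ₗ (mk R B A).flip a))

def twistLeftMul (b : B) : A ⊗[R] B →ₗ[R] A ⊗[R] B :=
  lift ((LinearMap.mul R (A ⊗[R] B)).compl₁₂ (τ ∘ₗ mk R B A b)
    Algebra.TensorProduct.includeRight.toLinearMap)

@[simp]
theorem twistRightMul_tmul (a x : A) (y : B) :
    twistRightMul τ a (x ⊗ₜ y) = (x ⊗ₜ 1) * τ (y ⊗ₜ a) := rfl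

@[simp]
theorem twistLeftMul_tmul (b : B) (x : A) (y : B) :
    twistLeftMul τ b (x ⊗ₜ y) = τ (b ⊗ₜ x) * (1 ⊗ₜ y) := rfl

end TwistMul

namespace IsTwistingMap

variable {k A B : Type*} [Field k] [Ring A] [Ring B] [Algebra k A] [Algebra k B]
  {τ : B ⊗[k] A →ₗ[k] A ⊗[k] B}

theorem map_tmul_mul (hτ : IsTwistingMap k A B τ) (b : B) (a a' : A) :
    τ (b ⊗ₜ (a * a')) = twistRightMul τ a' (τ (b ⊗ₜ a)) := by
  have h := LinearMap.congr_fun hτ.2.2.1 ((b ⊗ₜ a) ⊗ₜ a')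
  simp only [LinearMap.comp_apply, LinearEquiv.coe_toLinearMap, assoc_tmul,
    LinearMap.lTensor_tmul, LinearMap.mul'_apply, LinearMap.rTensor_tmul] at h
  rw [h]
  induction τ (b ⊗ₜ a) with
  | zero => simp
  | tmul x y => simp [rTensor_mul'_assoc_symm_tmul]
  | add s t hs ht => simp [add_tmul, hs, ht]

theorem map_mul_tmul (hτ : IsTwistingMap k A B τ) (b b' : B) (a : A) :
    τ ((b * b') ⊗ₜ a) = twistLeftMul τ b (τ (b' ⊗ₜ a)) := by
  have h := LinearMap.congr_fun hτ.2.2.2 (b ⊗ₜ (b' ⊗ₜ a))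
  simp only [LinearMap.comp_apply, LinearEquiv.coe_toLinearMap, assoc_symm_tmul,
    LinearMap.lTensor_tmul, LinearMap.mul'_apply, LinearMap.rTensor_tmul] at h
  rw [h]
  induction τ (b' ⊗ₜ a) with
  | zero => simp
  | tmul x y => simp [lTensor_mul'_assoc_tmul]
  | add s t hs ht => simp [tmul_add, hs, ht]

end IsTwistingMap

theorem CharTwo.eq_zero_or_eq_of_twist_relations {R : Type*} [CommRing R] [NoZeroDivisors R]
    [CharP R 2] {α β γ δ : R} (h₀ : γ + β * α + δ * γ = 0) (h₁ : β ^ 2 + δ ^ 2 = 1)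
    (h₂ : γ ^ 2 + δ ^ 2 = 1) :
    (β = 0 ∧ γ = 0 ∧ δ = 1) ∨ (β = α ∧ γ = α ∧ δ = α + 1) := by
  have hβδ : β + δ = 1 := CharTwo.sq_injective (by simp [CharTwo.add_sq, h₁])
  have hγδ : γ + δ = 1 := CharTwo.sq_injective (by simp [CharTwo.add_sq, h₂])
  have hγ : γ = β := by linear_combination hγδ - hβδ
  have hδ : δ = β + 1 := by linear_combination hβδ - β * CharTwo.two_eq_zero (R := R)
  subst γ δ
  have hβα : β * (α + β) = 0 := by
    linear_combination h₀ - β * CharTwo.two_eq_zero (R := R)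
  rcases mul_eq_zero.mp hβα with hβ | hαβ
  · left
    simp [hβ]
  · right
    have hβ : β = α := by linear_combination hαβ - α * CharTwo.two_eq_zero (R := R)
    simp [hβ]

namespace GA

variable {k : Type*} [Field k]

variable (k) in
theorem gen_mul_gen : gen k * gen k = 1 := by
  simp [gen, AddMonoidAlgebra.single_mul_single, AddMonoidAlgebra.one_def,
    (by decide : (1 + 1 : ZMod 2) = 0)]

variable (k) in
def tensorBasis : Module.Basis (ZMod 2 × ZMod 2) k (GA k ⊗[k] GA k) :=
  (AddMonoidAlgebra.basis (ZMod 2) k).tensorProduct (AddMonoidAlgebra.basis (ZMod 2) k)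

variable (k) in
def quad (α β γ δ : k) : GA k ⊗[k] GA k :=
  α • ((1 : GA k) ⊗ₜ (1 : GA k)) + β • ((1 : GA k) ⊗ₜ gen k)
    + γ • (gen k ⊗ₜ (1 : GA k)) + δ • (gen k ⊗ₜ gen k)

theorem repr_quad (α β γ δ : k) : (tensorBasis k).repr (quad k α β γ δ) =
    Finsupp.equivFunOnFinite.symm (fun ij => ![![α, β], ![γ, δ]] ij.1 ij.2) := by
  have hquad : quad k α β γ δ = α • tensorBasis k (0, 0) + β • tensorBasis k (0, 1)
      + γ • tensorBasis k (1, 0) + δ • tensorBasis k (1, 1) := by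
    simp [quad, tensorBasis, AddMonoidAlgebra.one_def, gen]
  ext ⟨i, j⟩
  fin_cases i <;> fin_cases j <;> simp +decide [hquad, Finsupp.single_apply]

theorem exists_eq_quad (t : GA k ⊗[k] GA k) : ∃ α β γ δ : k, t = quad k α β γ δ := by
  let c := (tensorBasis k).repr t
  refine ⟨c (0, 0), c (0, 1), c (1, 0), c (1, 1), (tensorBasis k).repr.injective ?_⟩
  ext ⟨i, j⟩
  fin_cases i <;> fin_cases j <;> simp only [repr_quad] <;> rfl

theorem quad_injective {α β γ δ α' β' γ' δ' : k} (h : quad k α β γ δ = quad k α' β' γ' δ') :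
    α = α' ∧ β = β' ∧ γ = γ' ∧ δ = δ' := by
  have hc := fun i j => congrArg (fun t => (tensorBasis k).repr t (i, j)) h
  simp only [repr_quad] at hc
  exact ⟨hc 0 0, hc 0 1, hc 1 0, hc 1 1⟩

theorem one_tmul_gen_eq_quad : (1 : GA k) ⊗ₜ gen k = quad k 0 1 0 0 := by
  simp [quad]

theorem gen_tmul_one_eq_quad : gen k ⊗ₜ (1 : GA k) = quad k 0 0 1 0 := by
  simp [quad]

theorem quad_add (α β γ δ α' β' γ' δ' : k) :
    quad k α β γ δ + quad k α' β' γ' δ' = quad k (α + α') (β + β') (γ + γ') (δ + δ') := by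
  simp only [quad, add_smul]
  abel

theorem quad_mul_quad (a₀ a₁ a₂ a₃ b₀ b₁ b₂ b₃ : k) :
    quad k a₀ a₁ a₂ a₃ * quad k b₀ b₁ b₂ b₃ =
      quad k (a₀ * b₀ + a₁ * b₁ + a₂ * b₂ + a₃ * b₃) (a₀ * b₁ + a₁ * b₀ + a₂ * b₃ + a₃ * b₂)
        (a₀ * b₂ + a₁ * b₃ + a₂ * b₀ + a₃ * b₁) (a₀ * b₃ + a₁ * b₂ + a₂ * b₁ + a₃ * b₀) := by
  simp only [quad, add_mul, mul_add, smul_mul_smul, Algebra.TensorProduct.tmul_mul_tmul,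
    gen_mul_gen, one_mul, mul_one]
  module

variable {τ : GA k ⊗[k] GA k →ₗ[k] GA k ⊗[k] GA k}

theorem twistRightMul_gen_quad (hτ : ∀ a : GA k, τ (1 ⊗ₜ a) = a ⊗ₜ 1) (α β γ δ : k) :
    twistRightMul τ (gen k) (quad k α β γ δ)
      = quad k γ 0 α 0 + quad k β 0 δ 0 * τ (gen k ⊗ₜ gen k) := by
  simp only [quad, map_add, map_smul, twistRightMul_tmul, hτ, add_mul, smul_mul_assoc,
    Algebra.TensorProduct.tmul_mul_tmul, gen_mul_gen, one_mul, mul_one, zero_smul, add_zero]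
  module

theorem twistLeftMul_gen_quad (hτ : ∀ b : GA k, τ (b ⊗ₜ 1) = 1 ⊗ₜ b) (α β γ δ : k) :
    twistLeftMul τ (gen k) (quad k α β γ δ)
      = quad k β α 0 0 + τ (gen k ⊗ₜ gen k) * quad k γ δ 0 0 := by
  simp only [quad, map_add, map_smul, twistLeftMul_tmul, hτ, mul_add, mul_smul_comm,
    Algebra.TensorProduct.tmul_mul_tmul, gen_mul_gen, mul_one, zero_smul, add_zero]
  module

theorem twist_relations {α β γ δ : k} (hτ : IsTwistingMap k (GA k) (GA k) τ)
    (hT : τ (gen k ⊗ₜ gen k) = quad k α β γ δ) :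
    γ + β * α + δ * γ = 0 ∧ β ^ 2 + δ ^ 2 = 1 ∧ γ ^ 2 + δ ^ 2 = 1 := by
  have hA := hτ.map_tmul_mul (gen k) (gen k) (gen k)
  rw [gen_mul_gen, hτ.1, hT, twistRightMul_gen_quad hτ.2.1, hT, quad_mul_quad, quad_add,
    one_tmul_gen_eq_quad] at hA
  have hB := hτ.map_mul_tmul (gen k) (gen k) (gen k)
  rw [gen_mul_gen, hτ.2.1, hT, twistLeftMul_gen_quad hτ.1, hT, quad_mul_quad, quad_add,
    gen_tmul_one_eq_quad] at hB
  obtain ⟨hA₀, hA₁, -, -⟩ := quad_injective hA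
  obtain ⟨-, -, hB₂, -⟩ := quad_injective hB
  exact ⟨by linear_combination -hA₀, by linear_combination -hA₁, by linear_combination -hB₂⟩

end GA

/-- For `char k = 2`, any twisting map on `k[ℤ₂] ⊗ k[ℤ₂]` has
`τ(b⊗a) = α(1⊗1) + a⊗b` or `τ(b⊗a) = α(1⊗1) + α(1⊗b) + α(a⊗1) + (α+1)(a⊗b)`
for some `α ∈ k`. -/
theorem stmt5 (k : Type*) [Field k] (hchar : ringChar k = 2)
    (τ : GA k ⊗[k] GA k →ₗ[k] GA k ⊗[k] GA k)
    (hτ : IsTwistingMap k (GA k) (GA k) τ) :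
    (∃ α : k, τ (gen k ⊗ₜ gen k)
        = α • ((1 : GA k) ⊗ₜ (1 : GA k)) + gen k ⊗ₜ gen k) ∨
    (∃ α : k, τ (gen k ⊗ₜ gen k)
        = α • ((1 : GA k) ⊗ₜ (1 : GA k)) + α • ((1 : GA k) ⊗ₜ gen k)
          + α • (gen k ⊗ₜ (1 : GA k)) + (α + 1) • (gen k ⊗ₜ gen k)) := by
  have : CharP k 2 := ringChar.eq_iff.mp hchar
  obtain ⟨α, β, γ, δ, hT⟩ := GA.exists_eq_quad (τ (gen k ⊗ₜ gen k))
  obtain ⟨h₀, h₁, h₂⟩ := GA.twist_relations hτ hT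
  rcases CharTwo.eq_zero_or_eq_of_twist_relations h₀ h₁ h₂ with
    ⟨rfl, rfl, rfl⟩ | ⟨rfl, rfl, rfl⟩
  · exact Or.inl ⟨α, by simp [hT, GA.quad]⟩
  · exact Or.inr ⟨_, hT⟩
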